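/- Every cubic sublattice Γ ⊆ ℤ³ with edge length e satisfies e²·ℤ³ ⊆ Γ, i.e., every integer vector multiplied by the square of the edge length lies in Γ. -/

import Mathlib

/-- Dot product on `ℤ³`. -/
def dot3 (a b : Fin 3 → ℤ) : ℤ := a 0 * b 0 + a 1 * b 1 + a 2 * b 2

/-- Cross product on `ℤ³`. -/
def cross3 (a b : Fin 3 → ℤ) : Fin 3 → ℤ :=
  ![a 1 * b 2 - a 2 * b 1, a 2 * b 0 - a 0 * b 2, a 0 * b 1 - a 1 * b 0]

/-- A vector of `ℤ³` is primitive if its coordinates are coprime. -/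
def Primitive (v : Fin 3 → ℤ) : Prop := Int.gcd (Int.gcd (v 0) (v 1)) (v 2) = 1

/-- A cubic sublattice of `ℤ³` with edge length `d`: a subgroup generated by three
pairwise orthogonal vectors of length `d`. -/
def IsCubicLattice (Γ : AddSubgroup (Fin 3 → ℤ)) (d : ℕ) : Prop :=
  ∃ a b c : Fin 3 → ℤ,
    Γ = AddSubgroup.closure {a, b, c} ∧
    dot3 a b = 0 ∧ dot3 a c = 0 ∧ dot3 b c = 0 ∧
    dot3 a a = (d : ℤ)^2 ∧ dot3 b b = (d : ℤ)^2 ∧ dot3 c c = (d : ℤ)^2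


/-! If `a, b, c` are pairwise orthogonal of squared length `e²`, the matrix `M` with rows
`a, b, c` satisfies `M Mᵀ = e² I`, hence also `Mᵀ M = e² I`. Reading the latter as
`e² x = (x ⬝ a) a + (x ⬝ b) b + (x ⬝ c) c` exhibits `e² x` as an integer combination
of the generators. -/

open Matrix

theorem dot3_eq_dotProduct (a b : Fin 3 → ℤ) : dot3 a b = a ⬝ᵥ b := by
  simp only [dot3, dotProduct, Fin.sum_univ_three]

theorem Matrix.mul_eq_smul_one_comm {R n : Type*} [CommRing R] [IsDomain R] [Fintype n]
    [DecidableEq n] {A B : Matrix n n R} {r : R} (hr : r ≠ 0) (h : A * B = r • 1) :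
    B * A = r • 1 := by
  have hdet : A.det ≠ 0 := by
    have : A.det * B.det = r ^ Fintype.card n := by
      rw [← det_mul, h, det_smul, det_one, mul_one]
    exact left_ne_zero_of_mul (this ▸ pow_ne_zero _ hr)
  refine smul_right_injective _ hdet ?_
  calc A.det • (B * A) = adjugate A * (A * B) * A := by
        rw [← Matrix.mul_assoc, adjugate_mul, Matrix.smul_mul, Matrix.one_mul, Matrix.smul_mul]
    _ = A.det • (r • 1) := by
        rw [h, Matrix.mul_smul, Matrix.mul_one, Matrix.smul_mul, adjugate_mul, smul_comm]

theorem Matrix.smul_mem_closure_range_of_transpose_mul_eq_smul_one {m : Type*} [Fintype m]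
    [DecidableEq m] {M : Matrix m m ℤ} {r : ℤ} (h : Mᵀ * M = r • 1) (x : m → ℤ) :
    r • x ∈ AddSubgroup.closure (Set.range M) := by
  have hx : r • x = (x ᵥ* Mᵀ) ᵥ* M := by
    rw [vecMul_vecMul, h, vecMul_smul, vecMul_one]
  rw [hx, vecMul_eq_sum]
  exact AddSubgroup.sum_mem _ fun i _ ↦
    AddSubgroup.zsmul_mem _ (AddSubgroup.subset_closure (Set.mem_range_self i)) _

theorem of_mul_transpose_eq_smul_one_of_dot3 {a b c : Fin 3 → ℤ} {r : ℤ}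
    (hab : dot3 a b = 0) (hac : dot3 a c = 0) (hbc : dot3 b c = 0)
    (haa : dot3 a a = r) (hbb : dot3 b b = r) (hcc : dot3 c c = r) :
    of ![a, b, c] * (of ![a, b, c])ᵀ = r • 1 := by
  simp only [dot3_eq_dotProduct] at *
  ext i j
  change ![a, b, c] i ⬝ᵥ ![a, b, c] j = _
  fin_cases i <;> fin_cases j <;> simp [dotProduct_comm, *]

/-- Every cubic sublattice of edge length `e` contains `e² · ℤ³`. -/
theorem sq_edge_smul_mem (Γ : AddSubgroup (Fin 3 → ℤ)) (e : ℕ) (he : 0 < e)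
    (hΓ : IsCubicLattice Γ e) (x : Fin 3 → ℤ) :
    ((e : ℤ)^2) • x ∈ Γ := by
  obtain ⟨a, b, c, rfl, hab, hac, hbc, haa, hbb, hcc⟩ := hΓ
  have hMMt := of_mul_transpose_eq_smul_one_of_dot3 hab hac hbc haa hbb hcc
  have hMtM := mul_eq_smul_one_comm (by positivity) hMMt
  have hrows : Set.range (of ![a, b, c]) = {a, b, c} :=
    range_cons _ _ |>.trans <| by rw [range_cons_cons_empty, Set.singleton_union]
  exact hrows ▸ smul_mem_closure_range_of_transpose_mul_eq_smul_one hMtM x
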